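/- For every positive integer n, (n+1)^{n-1} = Σ_b (n!/2^n) · Π_{v ∈ V(b)} (1 + 1/h(v)), where the sum is over all unlabeled binary trees b on n vertices and h(v) denotes the number of descendants of v in b (including v itself). -/

import Mathlib

/-- Unlabeled binary trees: each vertex has an (optional) left and right subtree.
`nil` is the empty tree. -/
inductive UBT : Type
  | nil : UBT
  | node : UBT → UBT → UBT
deriving DecidableEq

/-- Number of vertices of an unlabeled binary tree. -/
def UBT.size : UBT → ℕ
  | .nil => 0
  | .node l r => l.size + r.size + 1

/-- The vertex set of an unlabeled binary tree, encoded as root-to-vertex paths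
(`false` = step to the left child, `true` = step to the right child). -/
def UBT.verts : UBT → Finset (List Bool)
  | .nil => ∅
  | .node l r => insert [] ((l.verts.image (List.cons false)) ∪ (r.verts.image (List.cons true)))

/-- The descendant subtree at a given position, so for a vertex `v` of `b`,
`h(v) = ((b.sub v).size`, the number of descendants of `v` (including `v`). -/
def UBT.sub : UBT → List Bool → UBT
  | t, [] => t
  | .nil, _ => .nil
  | .node l r, b :: p => if b then r.sub p else l.sub p

/-- The (finite) set of all unlabeled binary trees on `n` vertices. -/
def treesOfSize : ℕ → Finset UBT
  | 0 => {UBT.nil}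
  | n + 1 =>
      (Finset.range (n + 1)).attach.biUnion fun i =>
        ((treesOfSize i.1) ×ˢ (treesOfSize (n - i.1))).image fun p => UBT.node p.1 p.2
decreasing_by
  all_goals (have := i.2; simp only [Finset.mem_range] at this; omega)

/-!
Splitting a tree at its root, the total weight `T n = ∑_b ∏_v (1 + 1/h(v))` of the trees on
`n` vertices satisfies `T (n+1) = (n+2)/(n+1) · ∑_{i+j=n} T i · T j`. For `a n = n! T n / 2^n`
this reads `a (n+1) = (n+2)/2 · ∑_{i+j=n} C(n,i) a i a j`, which `a n = (n+1)^(n-1)` satisfies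
by the convolution `(n+2) · ∑_{i+j=n} C(n,i) (i+1)^(i-1) (j+1)^(j-1) = 2 (n+2)^n`. That is the
symmetrization of Abel's identity `∑_{i+j=n} C(n,i) (i+1)^(i-1) (y-i)^j = (y+1)^n`.
-/

open Finset Polynomial
open scoped Nat

section Abel

variable {R : Type*} [CommRing R]

theorem sum_antidiagonal_neg_one_pow_mul_choose_mul_pow_eq_zero {m n : ℕ} (h : n < m) :
    ∑ ij ∈ antidiagonal m, (-1 : R) ^ ij.2 * m.choose ij.1 * ((ij.1 : R) + 1) ^ n = 0 := by
  have := congr_fun (fwdDiff_iter_pow_eq_zero_of_lt (R := R) h) 1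
  rw [fwdDiff_iter_eq_sum_shift, Pi.zero_apply] at this
  rw [Nat.sum_antidiagonal_eq_sum_range_succ
    (fun i j ↦ (-1 : R) ^ j * m.choose i * ((i : R) + 1) ^ n), ← this]
  refine sum_congr rfl fun i _ ↦ ?_
  simp [add_comm]

variable (R) in
/-- At `i = 0` the truncated exponent `i - 1 = 0` gives the intended value `1 ^ (-1) = 1`. -/
noncomputable def abelPoly (n : ℕ) : R[X] :=
  ∑ ij ∈ antidiagonal n,
    C ((n.choose ij.1 : R) * ((ij.1 : R) + 1) ^ (ij.1 - 1)) * (X - C (ij.1 : R)) ^ ij.2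

theorem derivative_abelPoly_succ (n : ℕ) :
    derivative (abelPoly R (n + 1)) = C ((n : R) + 1) * abelPoly R n := by
  rw [abelPoly, abelPoly, derivative_sum, Nat.sum_antidiagonal_succ', mul_sum]
  simp only [pow_zero, mul_one, derivative_C, zero_add]
  refine sum_congr rfl fun ij hij ↦ ?_
  obtain ⟨i, j⟩ := ij
  obtain rfl : i + j = n := mem_antidiagonal.1 hij
  have hchoose : ((i + j + 1).choose i : R) * (j + 1 : ℕ) = (i + j + 1) * (i + j).choose i := by
    rw [← Nat.cast_mul, show j + 1 = i + j + 1 - i by omega, ← Nat.choose_mul_succ_eq]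
    push_cast
    ring
  simp only [derivative_C_mul, derivative_pow, derivative_sub, derivative_X, derivative_C,
    sub_zero, mul_one, add_tsub_cancel_right]
  rw [← mul_assoc, ← C_mul, ← mul_assoc, ← C_mul]
  congr 2
  push_cast at hchoose ⊢
  linear_combination ((i : R) + 1) ^ (i - 1) * hchoose

theorem eval_neg_one_abelPoly_succ (n : ℕ) : (abelPoly R (n + 1)).eval (-1) = 0 := by
  rw [abelPoly, eval_finsetSum,
    ← sum_antidiagonal_neg_one_pow_mul_choose_mul_pow_eq_zero (R := R) n.lt_succ_self]
  refine sum_congr rfl fun ij hij ↦ ?_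
  obtain ⟨i, j⟩ := ij
  have hij : i + j = n + 1 := mem_antidiagonal.1 hij
  have hpow : ((i : R) + 1) ^ (i - 1) * ((i : R) + 1) ^ j = ((i : R) + 1) ^ n := by
    rcases i with _ | i
    · simp
    · rw [← pow_add, show i + 1 - 1 + j = n by omega]
  simp only [eval_mul, eval_C, eval_pow, eval_sub, eval_X]
  rw [show (-1 : R) - i = -1 * (i + 1) by ring, mul_pow, ← hpow]
  ring

/- Both sides of the `n + 1` case have derivative `(n + 1)` times the two sides of the `n` case,
and agree at `-1`, where `abelPoly` evaluates to an `(n + 1)`-st forward difference of `x ^ n`. -/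
theorem abelPoly_eq_X_add_one_pow [IsAddTorsionFree R] (n : ℕ) : abelPoly R n = (X + 1) ^ n := by
  induction n with
  | zero => simp [abelPoly]
  | succ n ih =>
    suffices h : abelPoly R (n + 1) - (X + 1) ^ (n + 1) = 0 from sub_eq_zero.1 h
    set D := abelPoly R (n + 1) - (X + 1) ^ (n + 1)
    have hD : derivative D = 0 := by
      simp [D, derivative_abelPoly_succ, ih, derivative_pow]
    have hD0 : D.eval (-1) = 0 := by simp [D, eval_neg_one_abelPoly_succ]
    rw [eq_C_of_derivative_eq_zero hD, eval_C] at hD0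
    rw [eq_C_of_derivative_eq_zero hD, hD0, C_0]

theorem abel_convolution [IsAddTorsionFree R] (m : ℕ) :
    ((m : R) + 2) * ∑ ij ∈ antidiagonal m,
        (m.choose ij.1 : R) * (((ij.1 : R) + 1) ^ (ij.1 - 1) * ((ij.2 : R) + 1) ^ (ij.2 - 1)) =
      2 * ((m : R) + 2) ^ m := by
  rcases m with _ | k
  · simp
  have habel : ∑ ij ∈ antidiagonal k,
      (k.choose ij.1 : R) * (((ij.1 : R) + 1) ^ (ij.1 - 1) * ((ij.2 : R) + 2) ^ ij.2) =
        ((k : R) + 3) ^ k := by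
    have := congr_arg (eval ((k : R) + 2)) (abelPoly_eq_X_add_one_pow (R := R) k)
    rw [abelPoly, eval_finsetSum, eval_pow, eval_add, eval_X, eval_one] at this
    convert this using 1
    · refine sum_congr rfl fun ij hij ↦ ?_
      obtain ⟨i, j⟩ := ij
      obtain rfl : i + j = k := mem_antidiagonal.1 hij
      simp only [eval_mul, eval_C, eval_pow, eval_sub, eval_X]
      push_cast
      ring
    · ring
  -- Pascal's rule gives two copies of `habel`, exchanged by `(i, j) ↦ (j, i)`.
  rw [sum_antidiagonal_choose_succ_mul
    (fun i j ↦ ((i : R) + 1) ^ (i - 1) * ((j : R) + 1) ^ (j - 1)) k]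
  nth_rewrite 2 [← Nat.sum_antidiagonal_swap]
  simp only [Prod.fst_swap, Prod.snd_swap, Nat.add_sub_cancel]
  rw [← sum_add_distrib]
  calc _ = ((k : R) + 3) * (2 * ∑ ij ∈ antidiagonal k,
        (k.choose ij.1 : R) * (((ij.1 : R) + 1) ^ (ij.1 - 1) * ((ij.2 : R) + 2) ^ ij.2)) := by
        push_cast
        congr 1
        · ring
        · rw [mul_sum]
          exact sum_congr rfl fun _ _ ↦ by ring
    _ = 2 * ((k + 1 : ℕ) + 2) ^ (k + 1) := by
        rw [habel]
        push_cast
        ring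

end Abel

theorem mem_treesOfSize {b : UBT} {n : ℕ} : b ∈ treesOfSize n ↔ b.size = n := by
  induction b generalizing n with
  | nil => cases n <;> simp [treesOfSize, UBT.size]
  | node l r ihl ihr =>
    cases n with
    | zero => simp [treesOfSize, UBT.size]
    | succ n =>
      simp only [treesOfSize, mem_biUnion, mem_attach, true_and, mem_image, mem_product,
        Prod.exists, UBT.node.injEq, UBT.size, Subtype.exists, mem_range]
      constructor
      · rintro ⟨i, hi, l, r, ⟨hl, hr⟩, rfl, rfl⟩
        rw [ihl.1 hl, ihr.1 hr]
        omega
      · intro h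
        exact ⟨l.size, by omega, l, r, ⟨ihl.2 rfl, ihr.2 (by omega)⟩, rfl, rfl⟩

theorem sum_treesOfSize_succ {M : Type*} [AddCommMonoid M] (f : UBT → M) (n : ℕ) :
    ∑ b ∈ treesOfSize (n + 1), f b =
      ∑ ij ∈ antidiagonal n,
        ∑ l ∈ treesOfSize ij.1, ∑ r ∈ treesOfSize ij.2, f (.node l r) := by
  rw [treesOfSize, sum_biUnion, Finset.Nat.sum_antidiagonal_eq_sum_range_succ
    (fun i j ↦ ∑ l ∈ treesOfSize i, ∑ r ∈ treesOfSize j, f (.node l r)),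
    ← sum_attach (range (n + 1))]
  · refine sum_congr rfl fun i _ ↦ ?_
    rw [sum_image fun p _ q _ h ↦ Prod.ext_iff.2 (UBT.node.inj h), sum_product]
  · intro i _ j _ hij
    simp only [Function.onFun, disjoint_left, mem_image, mem_product, not_exists, not_and]
    rintro _ ⟨p, ⟨hp, -⟩, rfl⟩ q ⟨hq, -⟩ hpq
    injection hpq with h
    rw [mem_treesOfSize] at hp hq
    exact hij (Subtype.ext (by rw [← hp, ← hq, h]))

namespace UBT

noncomputable def weight (b : UBT) : ℚ := ∏ v ∈ b.verts, (1 + 1 / ((b.sub v).size : ℚ))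

@[simp] theorem weight_nil : weight .nil = 1 := by simp [weight, verts]

theorem weight_node (l r : UBT) :
    weight (.node l r) = (1 + 1 / ((l.size + r.size + 1 : ℕ) : ℚ)) * (weight l * weight r) := by
  have hroot : [] ∉ l.verts.image (List.cons false) ∪ r.verts.image (List.cons true) := by simp
  have hdisj : Disjoint (l.verts.image (List.cons false)) (r.verts.image (List.cons true)) := by
    simp [disjoint_left]
  rw [weight, verts, prod_insert hroot, prod_union hdisj,
    prod_image List.cons_injective.injOn, prod_image List.cons_injective.injOn]
  simp [sub, size, weight]

end UBT

noncomputable def treeWeightSum (n : ℕ) : ℚ := ∑ b ∈ treesOfSize n, b.weight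

theorem treeWeightSum_zero : treeWeightSum 0 = 1 := by simp [treeWeightSum, treesOfSize]

theorem treeWeightSum_succ (n : ℕ) :
    treeWeightSum (n + 1) =
      (1 + 1 / ((n + 1 : ℕ) : ℚ)) *
        ∑ ij ∈ antidiagonal n, treeWeightSum ij.1 * treeWeightSum ij.2 := by
  rw [treeWeightSum, sum_treesOfSize_succ, mul_sum]
  refine sum_congr rfl fun ij hij ↦ ?_
  rw [treeWeightSum, treeWeightSum, sum_mul_sum, mul_sum]
  refine sum_congr rfl fun l hl ↦ ?_
  rw [mul_sum]
  refine sum_congr rfl fun r hr ↦ ?_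
  rw [mem_treesOfSize] at hl hr
  rw [UBT.weight_node, hl, hr, mem_antidiagonal.1 hij]

theorem factorial_mul_treeWeightSum (n : ℕ) :
    (n ! : ℚ) * treeWeightSum n = 2 ^ n * ((n : ℚ) + 1) ^ (n - 1) := by
  induction n using Nat.strong_induction_on with
  | _ n ih =>
    rcases n with _ | m
    · simp [treeWeightSum_zero]
    have hconv : (m ! : ℚ) * ∑ ij ∈ antidiagonal m, treeWeightSum ij.1 * treeWeightSum ij.2 =
        2 ^ m * ∑ ij ∈ antidiagonal m,
          (m.choose ij.1 : ℚ) *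
            (((ij.1 : ℚ) + 1) ^ (ij.1 - 1) * ((ij.2 : ℚ) + 1) ^ (ij.2 - 1)) := by
      rw [mul_sum, mul_sum]
      refine sum_congr rfl fun ij hij ↦ ?_
      obtain ⟨i, j⟩ := ij
      obtain rfl : i + j = m := mem_antidiagonal.1 hij
      rw [← Nat.add_choose_mul_factorial_mul_factorial, ← Nat.choose_symm_add]
      have hi := ih i (by omega)
      have hj := ih j (by omega)
      push_cast
      linear_combination ((i + j).choose i : ℚ) *
        ((j ! : ℚ) * treeWeightSum j * hi + 2 ^ i * ((i : ℚ) + 1) ^ (i - 1) * hj)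
    have hfactor : ((m : ℚ) + 1) * (1 + 1 / ((m + 1 : ℕ) : ℚ)) = (m : ℚ) + 2 := by
      push_cast
      field_simp
      ring
    rw [treeWeightSum_succ, Nat.factorial_succ]
    push_cast at hfactor ⊢
    linear_combination ((m : ℚ) + 2) * hconv + 2 ^ m * abel_convolution (R := ℚ) m +
      ((m ! : ℚ) * ∑ ij ∈ antidiagonal m, treeWeightSum ij.1 * treeWeightSum ij.2) * hfactor

theorem postnikov_general (n : ℕ) :
    ((n + 1) ^ (n - 1) : ℚ) =
      ∑ b ∈ treesOfSize n, ((n.factorial : ℚ) / 2 ^ n) *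
        ∏ v ∈ b.verts, (1 + 1 / ((b.sub v).size : ℚ)) := by
  rw [← mul_sum]
  change _ = _ * treeWeightSum n
  rw [div_mul_eq_mul_div, factorial_mul_treeWeightSum, mul_div_cancel_left₀ _ (by positivity)]

/-- **Postnikov's identity.** For every positive integer `n`,
`(n+1)^(n-1) = Σ_b (n!/2^n) Π_{v ∈ V(b)} (1 + 1/h(v))`, where `b` ranges over
unlabeled binary trees on `n` vertices and `h(v)` is the number of descendants of `v`. -/
theorem postnikov (n : ℕ) (hn : 0 < n) :
    ((n + 1) ^ (n - 1) : ℚ) =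
      ∑ b ∈ treesOfSize n, ((n.factorial : ℚ) / 2 ^ n) *
        ∏ v ∈ b.verts, (1 + 1 / ((b.sub v).size : ℚ)) :=
  postnikov_general n
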